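/- Let X, Y, and Z be random variables, ζ := E[X | Y, Z], and let γ be any function of Y and Z. Suppose that, for some δ₁, δ₂ > 0, P{ ζ > γ(Y,Z) + √(Var(X | Y,Z)/δ₁) } ≥ 1 − δ₂. Then P{ X ≥ γ(Y,Z) } ≥ 1 − δ₁ − δ₂. -/

import Mathlib

open MeasureTheory

/-!
Where `ζ > γ + √(V / δ₁)`, `X` can drop below `γ` only if `(X - ζ)² > V / δ₁`, and by the
conditional Chebyshev inequality this has probability at most `δ₁`. That inequality is the
conditional Markov inequality `P(E[W | m] < δ W) ≤ δ` for `W = (X - ζ)²`: multiplied by `E[W | m]`,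
the indicator of the event is at most `δ W`, so its conditional probability is at most `δ` where
`E[W | m] > 0`, while `W` vanishes a.e. where `E[W | m] = 0`.
-/

namespace RFFTest

open ProbabilityTheory

section

variable {Ω : Type*} {m m₀ : MeasurableSpace Ω} {μ : Measure[m₀] Ω} {W : Ω → ℝ}

lemma ae_eq_zero_of_condExp_nonpos (hm : m ≤ m₀) [SigmaFinite (μ.trim hm)]
    (hW : Integrable W μ) (hW₀ : 0 ≤ᵐ[μ] W) :
    ∀ᵐ ω ∂μ, μ[W | m] ω ≤ 0 → W ω = 0 := by
  set S := {ω | μ[W | m] ω ≤ 0}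
  have hS : MeasurableSet[m] S :=
    measurableSet_le stronglyMeasurable_condExp.measurable measurable_const
  have hint : ∫ ω in S, W ω ∂μ = 0 := by
    refine le_antisymm ?_ (setIntegral_nonneg_ae (hm _ hS) (hW₀.mono fun _ h _ => h))
    rw [← setIntegral_condExp hm hW hS]
    exact setIntegral_nonpos (hm _ hS) fun _ h => h
  exact (ae_restrict_iff' (hm _ hS)).mp <|
    (setIntegral_eq_zero_iff_of_nonneg_ae (ae_restrict_of_ae hW₀) hW.integrableOn).mp hint

lemma condExp_indicator_le_of_condExp_pos [IsFiniteMeasure μ]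
    (hW : Integrable W μ) (hW₀ : 0 ≤ᵐ[μ] W) {δ : ℝ} (hδ : 0 ≤ δ) {B : Set Ω}
    (hB : MeasurableSet B) (hBW : ∀ ω ∈ B, μ[W | m] ω ≤ δ * W ω) :
    ∀ᵐ ω ∂μ, 0 < μ[W | m] ω → μ[B.indicator 1 | m] ω ≤ δ := by
  set V := μ[W | m]
  have hind : B.indicator V = V * B.indicator 1 := by
    ext ω; by_cases hω : ω ∈ B <;> simp [hω]
  have hle : B.indicator V ≤ᵐ[μ] δ • W := by
    filter_upwards [hW₀] with ω hω₀
    by_cases hω : ω ∈ B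
    · simpa [hω] using hBW ω hω
    · simpa [hω] using mul_nonneg hδ hω₀
  have hVB : Integrable (B.indicator V) μ := integrable_condExp.indicator hB
  filter_upwards [condExp_mono hVB (hW.smul δ) hle, condExp_smul δ W m,
    hind ▸ condExp_mul_of_stronglyMeasurable_left stronglyMeasurable_condExp (hind ▸ hVB)
      ((integrable_const 1).indicator hB)] with ω hmono hsmul hpull hpos
  rw [hpull, hsmul] at hmono
  simp only [Pi.mul_apply, Pi.smul_apply, smul_eq_mul] at hmono
  nlinarith

theorem measureReal_condExp_lt_mul_le_of_stronglyMeasurable (hm : m ≤ m₀) [IsFiniteMeasure μ]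
    (hWm : StronglyMeasurable W) (hW : Integrable W μ) (hW₀ : 0 ≤ᵐ[μ] W) {δ : ℝ} (hδ : 0 ≤ δ) :
    μ.real {ω | μ[W | m] ω < δ * W ω} ≤ δ * μ.real Set.univ := by
  set B := {ω | μ[W | m] ω < δ * W ω}
  set S := {ω | 0 < μ[W | m] ω}
  have hB : MeasurableSet B := measurableSet_lt
    (stronglyMeasurable_condExp.mono hm).measurable (measurable_const.mul hWm.measurable)
  have hS : MeasurableSet[m] S :=
    measurableSet_lt measurable_const stronglyMeasurable_condExp.measurable
  have hBS : B ≤ᵐ[μ] (B ∩ S : Set Ω) := by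
    filter_upwards [ae_eq_zero_of_condExp_nonpos hm hW hW₀, condExp_nonneg (m := m) hW₀]
      with ω hzero hnonneg (hωB : μ[W | m] ω < δ * W ω)
    refine ⟨hωB, show 0 < μ[W | m] ω from ?_⟩
    by_contra! hω
    have hneg : μ[W | m] ω < 0 := by simpa [hzero hω] using hωB
    exact hnonneg.not_gt hneg
  calc μ.real B ≤ μ.real (B ∩ S) :=
        ENNReal.toReal_mono (measure_ne_top _ _) (measure_mono_ae hBS)
    _ = ∫ ω in S, B.indicator 1 ω ∂μ := by
      rw [setIntegral_indicator hB]; simp [Set.inter_comm]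
    _ = ∫ ω in S, μ[B.indicator 1 | m] ω ∂μ :=
      (setIntegral_condExp hm ((integrable_const 1).indicator hB) hS).symm
    _ ≤ ∫ _ in S, δ ∂μ := by
      refine setIntegral_mono_ae_restrict integrable_condExp.integrableOn integrableOn_const ?_
      exact (ae_restrict_iff' (hm _ hS)).mpr
        (condExp_indicator_le_of_condExp_pos hW hW₀ hδ hB fun _ hω => hω.le)
    _ = δ * μ.real S := by simp [mul_comm]
    _ ≤ δ * μ.real Set.univ :=
        mul_le_mul_of_nonneg_left (measureReal_mono (Set.subset_univ _)) hδ

theorem measureReal_condExp_lt_mul_le (hm : m ≤ m₀) [IsFiniteMeasure μ]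
    (hW : Integrable W μ) (hW₀ : 0 ≤ᵐ[μ] W) {δ : ℝ} (hδ : 0 ≤ δ) :
    μ.real {ω | μ[W | m] ω < δ * W ω} ≤ δ * μ.real Set.univ := by
  have hWW' : W =ᵐ[μ] hW.1.mk W := hW.1.ae_eq_mk
  have hsets : {ω | μ[W | m] ω < δ * W ω} =ᵐ[μ]
      {ω | μ[hW.1.mk W | m] ω < δ * hW.1.mk W ω} := by
    filter_upwards [hWW', condExp_congr_ae (m := m) hWW'] with ω h h'
    change (_ < _) = (_ < _)
    rw [h, h']
  rw [measureReal_congr hsets]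
  exact measureReal_condExp_lt_mul_le_of_stronglyMeasurable hm hW.1.stronglyMeasurable_mk
    (hW.congr hWW') (hW₀.trans_eq hWW') hδ

theorem measureReal_condVar_lt_mul_sq_le (hm : m ≤ m₀) [IsFiniteMeasure μ] {X : Ω → ℝ}
    (hX : Integrable ((X - μ[X | m]) ^ 2) μ) {δ : ℝ} (hδ : 0 ≤ δ) :
    μ.real {ω | Var[X; μ | m] ω < δ * (X ω - μ[X | m] ω) ^ 2} ≤ δ * μ.real Set.univ :=
  measureReal_condExp_lt_mul_le hm hX (Filter.Eventually.of_forall fun _ => sq_nonneg _) hδ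

variable {X : Ω → ℝ}

/- `X ^ 2` integrable does not make `X` a.e. measurable, so `X` need not be in `L²`;
when `X` is not integrable, `μ[X | m] = 0`. -/
lemma integrable_sub_condExp_sq [IsFiniteMeasure μ] (hX : Integrable (X ^ 2) μ) :
    Integrable ((X - μ[X | m]) ^ 2) μ := by
  by_cases hXi : Integrable X μ
  · have hX₂ : MemLp X 2 μ := (memLp_two_iff_integrable_sq hXi.1).mpr hX
    exact (hX₂.sub (hX₂.condExp one_le_two)).integrable_sq
  · simpa [condExp_of_not_integrable hXi] using hX

lemma condVar_ae_eq_condExp_sq_sub_sq_condExp_of_integrable_sq (hm : m ≤ m₀)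
    [IsFiniteMeasure μ] (hX : Integrable (X ^ 2) μ) :
    Var[X; μ | m] =ᵐ[μ] μ[X ^ 2 | m] - μ[X | m] ^ 2 := by
  by_cases hXi : Integrable X μ
  · exact condVar_ae_eq_condExp_sq_sub_sq_condExp hm ((memLp_two_iff_integrable_sq hXi.1).mpr hX)
  · simp [condVar, condExp_of_not_integrable hXi]

end

lemma le_of_add_sqrt_div_lt {a v z x δ : ℝ} (hδ : 0 < δ) (hv : δ * (x - z) ^ 2 ≤ v)
    (h : a + √(v / δ) < z) : a ≤ x := by
  have hsq : (z - x) ^ 2 ≤ v / δ := by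
    rw [le_div_iff₀ hδ]
    linarith [sub_sq_comm x z]
  linarith [(le_abs_self _).trans (Real.abs_le_sqrt hsq)]

/-- **Lemma (power via conditional Chebyshev).**
Let `X`, `Y`, `Z` be random variables on a probability space, `m` the σ-algebra generated
by `(Y, Z)`, `ζ = E[X | Y, Z]` the conditional expectation and
`V = E[X² | Y, Z] − ζ²` the conditional variance of `X` given `(Y, Z)`, and let `g` be any
function of `(Y, Z)`.  Suppose that, for some `δ₁, δ₂ > 0`,
`P{ζ > g(Y,Z) + √(V/δ₁)} ≥ 1 − δ₂`.  Then `P{X ≥ g(Y,Z)} ≥ 1 − δ₁ − δ₂`. -/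
theorem power_from_conditional_mean_variance
    {Ω β γ' : Type*} [MeasurableSpace Ω] [MeasurableSpace β] [MeasurableSpace γ']
    (μ : Measure Ω) [IsProbabilityMeasure μ]
    (X : Ω → ℝ) (Y : Ω → β) (Z : Ω → γ')
    (hY : Measurable Y) (hZ : Measurable Z)
    (hX : Integrable (fun ω => X ω ^ 2) μ)
    (g : β × γ' → ℝ)
    (δ₁ δ₂ : ℝ) (hδ₁ : 0 < δ₁) (hδ₂ : 0 < δ₂)
    (m : MeasurableSpace Ω)
    (hm : m = MeasurableSpace.comap (fun ω => (Y ω, Z ω)) inferInstance)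
    (ζ V : Ω → ℝ)
    (hζ : ζ = μ[X | m])
    (hV : V = fun ω => (μ[fun ω' => X ω' ^ 2 | m]) ω - ζ ω ^ 2)
    (hhyp : ENNReal.ofReal (1 - δ₂) ≤
      μ {ω | g (Y ω, Z ω) + Real.sqrt (V ω / δ₁) < ζ ω}) :
    ENNReal.ofReal (1 - δ₁ - δ₂) ≤ μ {ω | g (Y ω, Z ω) ≤ X ω} := by
  have hm₀ := (hY.prodMk hZ).comap_le
  rw [← hm] at hm₀
  have hVar : Var[X; μ | m] =ᵐ[μ] V := by
    subst hζ hV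
    exact condVar_ae_eq_condExp_sq_sub_sq_condExp_of_integrable_sq hm₀ hX
  set A := {ω | g (Y ω, Z ω) + √(V ω / δ₁) < ζ ω}
  set D := {ω | V ω < δ₁ * (X ω - ζ ω) ^ 2}
  have hD : μ D ≤ ENNReal.ofReal δ₁ := by
    have hsets : {ω | Var[X; μ | m] ω < δ₁ * (X ω - ζ ω) ^ 2} =ᵐ[μ] D := by
      filter_upwards [hVar] with ω h
      change (_ < _) = (_ < _)
      rw [h]
    have hcheb :=
      measureReal_condVar_lt_mul_sq_le hm₀ (integrable_sub_condExp_sq (X := X) hX) hδ₁.le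
    rw [← ofReal_measureReal, ← measureReal_congr hsets]
    gcongr
    simpa [hζ] using hcheb
  calc ENNReal.ofReal (1 - δ₁ - δ₂) = ENNReal.ofReal (1 - δ₂) - ENNReal.ofReal δ₁ := by
        rw [← ENNReal.ofReal_sub _ hδ₁.le, sub_right_comm]
    _ ≤ μ A - μ D := tsub_le_tsub hhyp hD
    _ ≤ μ (A \ D) := le_measure_sdiff
    _ ≤ μ {ω | g (Y ω, Z ω) ≤ X ω} :=
        measure_mono fun ω ⟨hA, hD⟩ => le_of_add_sqrt_div_lt hδ₁ (not_lt.mp hD) hA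

end RFFTest
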